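/- Suppose R ⊆ ℕ² × ℚ satisfies: for all rationals q, q > r ↔ ∃x₀ ∀x₁ R(x₀, x₁, q). Define R₁(x₀, x₁, q) to hold iff q_{(x₀)₁} ≤ q and R((x₀)₀, x₁, q_{(x₀)₁}), where (q_n) enumerates ℚ and ⟨·,·⟩ is a pairing bijection with inverses (·)₀, (·)₁. Then for all rationals q, q > r ↔ ∃x₀ ∀x₁ R₁(x₀, x₁, q), and moreover whenever q < q' and R₁(x₀, x₁, q) hold, R₁(x₀, x₁, q') holds. -/
import Mathlib


/-- Monotonization of a `Σ⁰₂` definition of the right Dedekind cut: `R₁` defines the same cut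
and is monotone in the rational argument. -/
theorem monotone_matrix_right_cut (r : ℝ) (qe : ℕ → ℚ) (hqe : Function.Surjective qe)
    (R : ℕ → ℕ → ℚ → Prop)
    (hR : ∀ q : ℚ, r < (q : ℝ) ↔ ∃ x₀, ∀ x₁, R x₀ x₁ q)
    (R₁ : ℕ → ℕ → ℚ → Prop)
    (hR₁ : ∀ x₀ x₁ q, R₁ x₀ x₁ q ↔
      qe (Nat.unpair x₀).2 ≤ q ∧ R (Nat.unpair x₀).1 x₁ (qe (Nat.unpair x₀).2)) :
    (∀ q : ℚ, r < (q : ℝ) ↔ ∃ x₀, ∀ x₁, R₁ x₀ x₁ q) ∧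
    (∀ (q q' : ℚ) (x₀ x₁ : ℕ), q < q' → R₁ x₀ x₁ q → R₁ x₀ x₁ q') := by
  constructor
  · intro q
    constructor
    · intro hq
      obtain ⟨x, hx⟩ := (hR q).1 hq
      obtain ⟨n, hn⟩ := hqe q
      refine ⟨Nat.pair x n, fun x₁ => ?_⟩
      rw [hR₁, Nat.unpair_pair, hn]
      exact ⟨le_refl q, hx x₁⟩
    · rintro ⟨x₀, hx⟩
      have h1 : qe (Nat.unpair x₀).2 ≤ q := ((hR₁ x₀ 0 q).1 (hx 0)).1
      have h2 : r < (qe (Nat.unpair x₀).2 : ℝ) :=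
        (hR (qe (Nat.unpair x₀).2)).2 ⟨(Nat.unpair x₀).1,
          fun x₁ => ((hR₁ x₀ x₁ q).1 (hx x₁)).2⟩
      exact lt_of_lt_of_le h2 (by exact_mod_cast h1)
  · intro q q' x₀ x₁ hlt h
    rw [hR₁] at h ⊢
    exact ⟨h.1.trans hlt.le, h.2⟩
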